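/- arXiv:2302.07222 — 5 statements merged into one kernel-verified Lean document; each statement's English description precedes it below -/
import Mathlib

section
/- Let H be a set of ordinals with no largest element, n ≥ 1, and ⟨u_b | b ∈ [H]^n⟩ a uniform n-dimensional Δ-system witnessed by ρ and ⟨r_m | m ⊆ n⟩. Suppose a ∈ [H]^m with m < n and α is m-addable (in fact k-addable for some k ≤ m) for a. Then the value u_b[r_{(m+1)∖{k}}] is the same for all b ∈ [H]^n with b[(m+1)∖{k}] = a; that is, the definition u_{a,k} := u_b[r_{(m+1)∖{k}}] does not depend on the choice of b. -/
universe u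

/-- The order type of a set of ordinals. -/
noncomputable def otp (s : Set Ordinal.{u}) : Ordinal.{u+1} :=
  @Ordinal.type ↑s (Subrel (· < ·) s) (by exact (inferInstance : IsWellOrder {x // x ∈ s} (Subrel (· < ·) (· ∈ s))))

/-- `enumAt a i α`: `α` is the `i`-th element of `a` in increasing order. -/
def enumAt (a : Set Ordinal.{u}) (i : Ordinal.{u+1}) (α : Ordinal.{u}) : Prop :=
  α ∈ a ∧ otp (a ∩ Set.Iio α) = i

/-- `a` and `b` are aligned. -/
def Aligned (a b : Set Ordinal.{u}) : Prop :=
  otp a = otp b ∧ ∀ γ ∈ a ∩ b, otp (a ∩ Set.Iio γ) = otp (b ∩ Set.Iio γ)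

/-- `r(a,b) = {i < otp(a) | a(i) = b(i)}`. -/
def ralign (a b : Set Ordinal.{u}) : Set Ordinal.{u+1} :=
  {i | ∃ α, enumAt a i α ∧ enumAt b i α}

/-- `a[r] = {a(i) | i ∈ r}`, the image of a set of indices under the increasing
enumeration of `a`. -/
def img (a : Set Ordinal.{u}) (r : Set Ordinal.{u+1}) : Set Ordinal.{u} :=
  {α | ∃ i ∈ r, enumAt a i α}

/-- `b[𝐦]` for a finite set `b`: the elements of `b` whose relative position in `b`
lies in `𝐦`. -/
noncomputable def fimg (b : Finset Ordinal.{u}) (s : Set Ordinal.{u+1}) : Set Ordinal.{u} :=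
  {α | α ∈ b ∧ (((b.filter (· < α)).card : Ordinal.{u+1}) ∈ s)}

/-- `α` is `k`-addable for the finite set `a`: `α ∉ a` and `|a ∩ α| = k`. -/
noncomputable def KAddable (α : Ordinal.{u}) (a : Finset Ordinal.{u}) (k : ℕ) : Prop :=
  α ∉ a ∧ (a.filter (· < α)).card = k

/-- `⟨u b | b ∈ [H]^n⟩` is a uniform `n`-dimensional Δ-system witnessed by `ρ` and
`⟨rr 𝐦 | 𝐦 ⊆ n⟩`. -/
noncomputable def IsUniformDeltaSystem (H : Set Ordinal.{u}) (n : ℕ)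
    (u : Finset Ordinal.{u} → Set Ordinal.{u}) (ρ : Ordinal.{u+1})
    (rr : Set Ordinal.{u+1} → Set Ordinal.{u+1}) : Prop :=
  (∀ b : Finset Ordinal.{u}, ↑b ⊆ H → b.card = n → otp (u b) = ρ) ∧
  (∀ a b : Finset Ordinal.{u}, ↑a ⊆ H → ↑b ⊆ H → a.card = n → b.card = n →
      ∀ m : Set Ordinal.{u+1}, Aligned ↑a ↑b → ralign ↑a ↑b = m →
        Aligned (u a) (u b) ∧ ralign (u a) (u b) = rr m) ∧
  (∀ m₀ m₁ : Set Ordinal.{u+1}, m₀ ⊆ Set.Iio (n : Ordinal.{u+1}) →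
      m₁ ⊆ Set.Iio (n : Ordinal.{u+1}) → rr (m₀ ∩ m₁) = rr m₀ ∩ rr m₁)

/-! ### Auxiliary lemmas -/

lemma otp_finset (s : Finset Ordinal.{u}) : otp ↑s = s.card := by
  rw [otp, Ordinal.type_fintype]
  simp [Fintype.card_coe]

lemma coe_filter_lt (s : Finset Ordinal.{u}) (γ : Ordinal.{u}) :
    (↑(s.filter (· < γ)) : Set Ordinal.{u}) = ↑s ∩ Set.Iio γ := by
  ext x; simp [Set.mem_Iio]

lemma otp_inter (s : Finset Ordinal.{u}) (γ : Ordinal.{u}) :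
    otp (↑s ∩ Set.Iio γ) = ((s.filter (· < γ)).card : Ordinal.{u+1}) := by
  rw [← coe_filter_lt, otp_finset]

lemma otp_inter_Iio_lt {s : Set Ordinal.{u}} {α : Ordinal.{u}} (hα : α ∈ s) :
    otp (s ∩ Set.Iio α) < otp s := by
  refine @PrincipalSeg.ordinal_type_lt _ _ _ _ ?_ ?_ ?_
  exact ⟨⟨⟨fun x => ⟨x.1, x.2.1⟩, fun x y h => by
      simpa [Subtype.ext_iff] using h⟩, by intro x y; exact Iff.rfl⟩,
    ⟨α, hα⟩, by
      rintro ⟨b, hb⟩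
      constructor
      · rintro ⟨⟨x, hx⟩, h⟩
        have : x = b := congrArg Subtype.val h
        subst this; exact hx.2
      · intro h; exact ⟨⟨b, ⟨hb, h⟩⟩, rfl⟩⟩

lemma enumAt_unique {s : Set Ordinal.{u}} {i : Ordinal.{u+1}} {α β : Ordinal.{u}}
    (h1 : enumAt s i α) (h2 : enumAt s i β) : α = β := by
  by_contra hne
  wlog hlt : α < β generalizing α β
  · exact this h2 h1 (Ne.symm hne) (lt_of_le_of_ne (not_lt.1 hlt) (Ne.symm hne))
  have h3 : s ∩ Set.Iio α = (s ∩ Set.Iio β) ∩ Set.Iio α := by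
    ext x; constructor
    · rintro ⟨hx, hxα⟩; exact ⟨⟨hx, lt_trans hxα hlt⟩, hxα⟩
    · rintro ⟨⟨hx, _⟩, hxα⟩; exact ⟨hx, hxα⟩
  have h4 : otp (s ∩ Set.Iio α) < otp (s ∩ Set.Iio β) := by
    rw [h3]; exact otp_inter_Iio_lt ⟨h1.1, hlt⟩
  rw [h1.2, h2.2] at h4
  exact lt_irrefl _ h4

lemma enumAt_finset {s : Finset Ordinal.{u}} {i : Ordinal.{u+1}} {α : Ordinal.{u}} :
    enumAt ↑s i α ↔ α ∈ s ∧ ((s.filter (· < α)).card : Ordinal.{u+1}) = i := by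
  rw [enumAt, otp_inter]; simp

lemma pos_lt_card {s : Finset Ordinal.{u}} {α : Ordinal.{u}} (hα : α ∈ s) :
    (s.filter (· < α)).card < s.card := by
  refine Finset.card_lt_card ⟨Finset.filter_subset _ _, fun h => ?_⟩
  have := h hα
  simp at this

lemma pos_strictMonoOn {s : Finset Ordinal.{u}} {α β : Ordinal.{u}} (hα : α ∈ s)
    (hlt : α < β) : (s.filter (· < α)).card < (s.filter (· < β)).card := by
  refine Finset.card_lt_card ⟨fun x hx => ?_, fun h => ?_⟩
  · rcases Finset.mem_filter.1 hx with ⟨h1, h2⟩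
    exact Finset.mem_filter.2 ⟨h1, lt_trans h2 hlt⟩
  · have := h (Finset.mem_filter.2 ⟨hα, hlt⟩)
    simp at this

lemma pos_mono {s : Finset Ordinal.{u}} {α β : Ordinal.{u}} (hle : α ≤ β) :
    (s.filter (· < α)).card ≤ (s.filter (· < β)).card := by
  refine Finset.card_le_card (fun x hx => ?_)
  rcases Finset.mem_filter.1 hx with ⟨h1, h2⟩
  exact Finset.mem_filter.2 ⟨h1, lt_of_lt_of_le h2 hle⟩

lemma pos_injOn {s : Finset Ordinal.{u}} {α β : Ordinal.{u}} (hα : α ∈ s) (hβ : β ∈ s)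
    (h : (s.filter (· < α)).card = (s.filter (· < β)).card) : α = β := by
  by_contra hne
  rcases lt_or_gt_of_ne hne with h1 | h1
  · exact absurd h (ne_of_lt (pos_strictMonoOn hα h1))
  · exact absurd h.symm (ne_of_lt (pos_strictMonoOn hβ h1))

lemma exists_pos_eq (s : Finset Ordinal.{u}) {j : ℕ} (hj : j < s.card) :
    ∃ x ∈ s, (s.filter (· < x)).card = j := by
  classical
  have hinj : Set.InjOn (fun α => (s.filter (· < α)).card) ↑s := by
    intro x hx y hy h
    exact pos_injOn (by exact_mod_cast hx) (by exact_mod_cast hy) h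
  have himg : s.image (fun α => (s.filter (· < α)).card) = Finset.range s.card := by
    apply Finset.eq_of_subset_of_card_le
    · intro x hx
      rcases Finset.mem_image.1 hx with ⟨α, hα, rfl⟩
      exact Finset.mem_range.2 (pos_lt_card hα)
    · rw [Finset.card_range, Finset.card_image_of_injOn hinj]
  have : j ∈ s.image (fun α => (s.filter (· < α)).card) := by
    rw [himg]; exact Finset.mem_range.2 hj
  rcases Finset.mem_image.1 this with ⟨α, hα, h⟩
  exact ⟨α, hα, h⟩

lemma exists_fresh (H : Set Ordinal.{u}) (hH : ∀ β ∈ H, ∃ γ ∈ H, β < γ)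
    {β₀ : Ordinal.{u}} (hβ₀ : β₀ ∈ H) (t : ℕ) :
    ∃ F : Finset Ordinal.{u}, ↑F ⊆ H ∧ F.card = t ∧ ∀ x ∈ F, β₀ < x := by
  classical
  induction t with
  | zero => exact ⟨∅, by simp, by simp, by simp⟩
  | succ t ih =>
    rcases ih with ⟨F, hFH, hFc, hFgt⟩
    have hmax : ∃ γ ∈ H, β₀ < γ ∧ ∀ x ∈ F, x < γ := by
      rcases hH ((insert β₀ F).max' ⟨β₀, Finset.mem_insert_self _ _⟩)
          (by
            have := (insert β₀ F).max'_mem ⟨β₀, Finset.mem_insert_self _ _⟩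
            rcases Finset.mem_insert.1 this with h | h
            · rw [h]; exact hβ₀
            · exact hFH h) with ⟨γ, hγH, hγ⟩
      refine ⟨γ, hγH, ?_, ?_⟩
      · exact lt_of_le_of_lt (Finset.le_max' _ _ (Finset.mem_insert_self _ _)) hγ
      · exact fun x hx =>
          lt_of_le_of_lt (Finset.le_max' _ _ (Finset.mem_insert_of_mem hx)) hγ
    rcases hmax with ⟨γ, hγH, hγβ, hγF⟩
    refine ⟨insert γ F, ?_, ?_, ?_⟩
    · intro x hx; rcases Finset.mem_insert.1 (by exact_mod_cast hx) with rfl | h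
      · exact hγH
      · exact hFH h
    · rw [Finset.card_insert_of_notMem, hFc]
      intro h; exact lt_irrefl γ (hγF γ h)
    · intro x hx; rcases Finset.mem_insert.1 hx with rfl | h
      · exact hγβ
      · exact hFgt x h

/-- The key transfer lemma: if `x` and `y` are aligned `n`-element subsets of `H`
with `M ⊆ r(x,y)`, then `u x [rr M] = u y [rr M]`. -/
lemma key_transfer {H : Set Ordinal.{u}} {n : ℕ}
    {u : Finset Ordinal.{u} → Set Ordinal.{u}} {ρ : Ordinal.{u+1}}
    {rr : Set Ordinal.{u+1} → Set Ordinal.{u+1}}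
    (hu : IsUniformDeltaSystem H n u ρ rr)
    {x y : Finset Ordinal.{u}} (hxH : ↑x ⊆ H) (hyH : ↑y ⊆ H)
    (hxc : x.card = n) (hyc : y.card = n)
    (hal : Aligned ↑x ↑y) {M : Set Ordinal.{u+1}}
    (hM : M ⊆ ralign ↑x ↑y) (hMn : M ⊆ Set.Iio (n : Ordinal.{u+1})) :
    img (u x) (rr M) = img (u y) (rr M) := by
  obtain ⟨-, hr⟩ := hu.2.1 x y hxH hyH hxc hyc (ralign ↑x ↑y) hal rfl
  have hra : ralign ↑x ↑y ⊆ Set.Iio (n : Ordinal.{u+1}) := by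
    rintro i ⟨α, hα, -⟩
    rcases enumAt_finset.1 hα with ⟨hαx, hcard⟩
    rw [← hcard, Set.mem_Iio, ← hxc]
    exact_mod_cast pos_lt_card hαx
  have hsub : rr M ⊆ ralign (u x) (u y) := by
    have h1 : M ∩ ralign ↑x ↑y = M := Set.inter_eq_self_of_subset_left hM
    have h2 := hu.2.2 M (ralign ↑x ↑y) hMn hra
    rw [h1] at h2
    rw [← hr, h2] at *
    exact h2 ▸ Set.inter_subset_right
  ext α
  constructor
  · rintro ⟨i, hiM, hi⟩
    rcases hsub hiM with ⟨β, h1, h2⟩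
    rw [enumAt_unique hi h1]
    exact ⟨i, hiM, h2⟩
  · rintro ⟨i, hiM, hi⟩
    rcases hsub hiM with ⟨β, h1, h2⟩
    rw [enumAt_unique hi h2]
    exact ⟨i, hiM, h1⟩

/-- The lower part of a finite set: elements at positions `≤ m`. -/
noncomputable def lowc (b : Finset Ordinal.{u}) (m : ℕ) : Finset Ordinal.{u} :=
  b.filter fun x => (b.filter (· < x)).card ≤ m

lemma fimg_eq (b : Finset Ordinal.{u}) (m k : ℕ) :
    fimg b (Set.Iio ((m : Ordinal.{u+1}) + 1) \ {(k : Ordinal.{u+1})}) =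
      ↑(b.filter fun x => (b.filter (· < x)).card ≤ m ∧ (b.filter (· < x)).card ≠ k) := by
  ext x
  simp only [fimg, Set.mem_setOf_eq, Set.mem_diff, Set.mem_Iio, Set.mem_singleton_iff,
    Finset.coe_filter, Nat.lt_succ_iff]
  constructor
  · rintro ⟨hx, hlt, hne⟩
    refine ⟨hx, ?_, ?_⟩
    · have : ((b.filter (· < x)).card : Ordinal.{u+1}) < ((m + 1 : ℕ) : Ordinal.{u+1}) := by
        push_cast; exact hlt
      exact Nat.lt_succ_iff.1 (by exact_mod_cast this)
    · intro h; exact hne (by exact_mod_cast h)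
  · rintro ⟨hx, hle, hne⟩
    refine ⟨hx, ?_, ?_⟩
    · have : ((b.filter (· < x)).card : Ordinal.{u+1}) < ((m + 1 : ℕ) : Ordinal.{u+1}) := by
        exact_mod_cast Nat.lt_succ_iff.2 hle
      push_cast at this; exact this
    · intro h; exact hne (by exact_mod_cast h)

lemma mem_M_iff {m k : ℕ} {i : Ordinal.{u+1}} :
    i ∈ Set.Iio ((m : Ordinal.{u+1}) + 1) \ {(k : Ordinal.{u+1})} ↔
      ∃ j : ℕ, i = (j : Ordinal.{u+1}) ∧ j ≤ m ∧ j ≠ k := by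
  constructor
  · rintro ⟨hlt, hne⟩
    have hlt' : i < ((m + 1 : ℕ) : Ordinal.{u+1}) := by push_cast; exact hlt
    have : i < Ordinal.omega0 := lt_of_lt_of_le hlt' (Ordinal.nat_lt_omega0 _).le
    rcases Ordinal.lt_omega0.1 this with ⟨j, rfl⟩
    refine ⟨j, rfl, ?_, ?_⟩
    · exact Nat.lt_succ_iff.1 (by exact_mod_cast hlt')
    · intro h; subst h; exact hne rfl
  · rintro ⟨j, rfl, hle, hne⟩
    constructor
    · have : (j : Ordinal.{u+1}) < ((m + 1 : ℕ) : Ordinal.{u+1}) := by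
        exact_mod_cast Nat.lt_succ_iff.2 hle
      push_cast at this; exact this
    · intro h
      apply hne
      have h2 : (j : Ordinal.{u+1}) = (k : Ordinal.{u+1}) := h
      exact_mod_cast h2

/-- Structure of `c = lowc b m ∪ F` for `F` a set of fresh elements above `b`. -/
lemma aux_struct (n m k : ℕ) (hmn : m < n) (hkm : k ≤ m)
    (b a F : Finset Ordinal.{u}) (hbc : b.card = n) (hac : a.card = m)
    (ha : a = b.filter fun x => (b.filter (· < x)).card ≤ m ∧ (b.filter (· < x)).card ≠ k)
    (hFc : F.card = n - (m + 1)) (hsep : ∀ x ∈ F, ∀ y ∈ b, y < x) :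
    ∃ β ∈ b, (b.filter (· < β)).card = k ∧ β ∉ a ∧
      lowc b m = insert β a ∧
      (lowc b m ∪ F).card = n ∧
      Aligned ↑b ↑(lowc b m ∪ F) ∧
      (∀ j : ℕ, j ≤ m → ∃ x ∈ lowc b m, (b.filter (· < x)).card = j ∧
        ((lowc b m ∪ F).filter (· < x)).card = j) ∧
      (∀ γ ∈ a, ((lowc b m ∪ F).filter (· < γ)).card =
        (a.filter (· < γ)).card + (if k ≤ (a.filter (· < γ)).card then 1 else 0)) ∧
      ((lowc b m ∪ F).filter (· < β)).card = k := by
  classical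
  obtain ⟨β, hβb, hβk⟩ := exists_pos_eq b (show k < b.card by omega)
  have hβa : β ∉ a := by
    rw [ha]; intro h
    exact (Finset.mem_filter.1 h).2.2 hβk
  have hab : a ⊆ b := by rw [ha]; exact Finset.filter_subset _ _
  have hblow : lowc b m = insert β a := by
    ext x
    simp only [lowc, Finset.mem_filter, Finset.mem_insert, ha]
    constructor
    · rintro ⟨hxb, hxm⟩
      by_cases hxk : (b.filter (· < x)).card = k
      · exact Or.inl (pos_injOn hxb hβb (hxk.trans hβk.symm))
      · exact Or.inr ⟨hxb, hxm, hxk⟩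
    · rintro (rfl | hx)
      · exact ⟨hβb, by rw [hβk]; exact hkm⟩
      · exact ⟨hx.1, hx.2.1⟩
  have hlowb : lowc b m ⊆ b := Finset.filter_subset _ _
  have hdisj : Disjoint (lowc b m) F := by
    rw [Finset.disjoint_left]
    intro x hx hxF
    exact lt_irrefl x (hsep x hxF x (hlowb hx))
  have hccard : (lowc b m ∪ F).card = n := by
    rw [Finset.card_union_of_disjoint hdisj, hblow, Finset.card_insert_of_notMem hβa,
      hac, hFc]
    omega
  -- filter of the union below an element of lowc b m agrees with filter of b
  have hposc : ∀ γ ∈ b, (b.filter (· < γ)).card ≤ m →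
      (lowc b m ∪ F).filter (· < γ) = b.filter (· < γ) := by
    intro γ hγb hγm
    ext y
    simp only [Finset.mem_filter, Finset.mem_union, lowc]
    constructor
    · rintro ⟨hy | hyF, hyγ⟩
      · exact ⟨hy.1, hyγ⟩
      · exact absurd (hsep y hyF γ hγb) (not_lt.2 hyγ.le)
    · rintro ⟨hyb, hyγ⟩
      refine ⟨Or.inl ⟨hyb, ?_⟩, hyγ⟩
      exact le_trans (pos_mono hyγ.le) hγm
  have haligned : Aligned ↑b ↑(lowc b m ∪ F) := by
    constructor
    · rw [otp_finset, otp_finset, hbc, hccard]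
    · rintro γ ⟨hγb, hγc⟩
      have hγb' : γ ∈ b := by exact_mod_cast hγb
      have hγc' : γ ∈ lowc b m ∪ F := by exact_mod_cast hγc
      have hγlow : γ ∈ lowc b m := by
        rcases Finset.mem_union.1 hγc' with h | h
        · exact h
        · exact absurd (hsep γ h γ hγb') (lt_irrefl γ)
      have hγm : (b.filter (· < γ)).card ≤ m := (Finset.mem_filter.1 hγlow).2
      rw [otp_inter, otp_inter, hposc γ hγb' hγm]
  have hconj7 : ∀ j : ℕ, j ≤ m → ∃ x ∈ lowc b m, (b.filter (· < x)).card = j ∧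
      ((lowc b m ∪ F).filter (· < x)).card = j := by
    intro j hj
    obtain ⟨x, hxb, hxj⟩ := exists_pos_eq b (show j < b.card by omega)
    have hxlow : x ∈ lowc b m := Finset.mem_filter.2 ⟨hxb, by rw [hxj]; exact hj⟩
    exact ⟨x, hxlow, hxj, by rw [hposc x hxb (by rw [hxj]; exact hj), hxj]⟩
  -- b.filter (· < β) consists of elements of a
  have hbβ : b.filter (· < β) = a.filter (· < β) := by
    ext y
    simp only [Finset.mem_filter]
    constructor
    · rintro ⟨hyb, hyβ⟩
      have : (b.filter (· < y)).card < k := by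
        rw [← hβk]; exact pos_strictMonoOn hyb hyβ
      refine ⟨?_, hyβ⟩
      rw [ha]; exact Finset.mem_filter.2 ⟨hyb, by omega, by omega⟩
    · rintro ⟨hya, hyβ⟩
      exact ⟨hab hya, hyβ⟩
  have hconj8 : ∀ γ ∈ a, ((lowc b m ∪ F).filter (· < γ)).card =
      (a.filter (· < γ)).card + (if k ≤ (a.filter (· < γ)).card then 1 else 0) := by
    intro γ hγa
    have hγb : γ ∈ b := hab hγa
    have hγm : (b.filter (· < γ)).card ≤ m := by
      have := (Finset.mem_filter.1 (ha ▸ hγa)).2.1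
      exact this
    -- b.filter (· < γ) = (insert β a).filter (· < γ)
    have hbfil : b.filter (· < γ) = (insert β a).filter (· < γ) := by
      ext y
      simp only [Finset.mem_filter, Finset.mem_insert]
      constructor
      · rintro ⟨hyb, hyγ⟩
        have hym : (b.filter (· < y)).card ≤ m :=
          le_trans (le_of_lt (pos_strictMonoOn hyb hyγ)) hγm
        have : y ∈ lowc b m := Finset.mem_filter.2 ⟨hyb, hym⟩
        rw [hblow] at this
        exact ⟨Finset.mem_insert.1 this, hyγ⟩
      · rintro ⟨rfl | hya, hyγ⟩
        · exact ⟨hβb, hyγ⟩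
        · exact ⟨hab hya, hyγ⟩
    have hiff : β < γ ↔ k ≤ (a.filter (· < γ)).card := by
      constructor
      · intro hβγ
        have h1 : a.filter (· < β) ⊆ a.filter (· < γ) := by
          intro y hy
          rcases Finset.mem_filter.1 hy with ⟨h1, h2⟩
          exact Finset.mem_filter.2 ⟨h1, lt_trans h2 hβγ⟩
        calc k = (b.filter (· < β)).card := hβk.symm
          _ = (a.filter (· < β)).card := by rw [hbβ]
          _ ≤ (a.filter (· < γ)).card := Finset.card_le_card h1
      · intro hk
        by_contra hβγ
        have hne : γ ≠ β := fun h => hβa (h ▸ hγa)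
        have hγβ : γ < β := lt_of_le_of_ne (not_lt.1 hβγ) hne
        have h1 : a.filter (· < γ) ⊂ a.filter (· < β) := by
          constructor
          · intro y hy
            rcases Finset.mem_filter.1 hy with ⟨hy1, hy2⟩
            exact Finset.mem_filter.2 ⟨hy1, lt_trans hy2 hγβ⟩
          · intro h
            have := h (Finset.mem_filter.2 ⟨hγa, hγβ⟩)
            simp at this
        have h2 : (a.filter (· < γ)).card < k := by
          calc (a.filter (· < γ)).card < (a.filter (· < β)).card := Finset.card_lt_card h1
            _ = (b.filter (· < β)).card := by rw [hbβ]
            _ = k := hβk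
        omega
    rw [hposc γ hγb hγm, hbfil, Finset.filter_insert]
    by_cases hβγ : β < γ
    · rw [if_pos hβγ, Finset.card_insert_of_notMem (fun h => hβa (Finset.filter_subset _ _ h)),
        if_pos (hiff.1 hβγ)]
    · rw [if_neg hβγ, if_neg (fun hk => hβγ (hiff.2 hk)), Nat.add_zero]
  have hconj9 : ((lowc b m ∪ F).filter (· < β)).card = k := by
    rw [hposc β hβb (by rw [hβk]; exact hkm), hβk]
  exact ⟨β, hβb, hβk, hβa, hblow, hccard, haligned, hconj7, hconj8, hconj9⟩

/-- If `H` has no largest element, `⟨u b | b ∈ [H]^n⟩` is a uniform `n`-dimensional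
Δ-system, `a ∈ [H]^m` with `m < n`, some ordinal is `k`-addable for `a` with `k ≤ m`,
then the value `u_b[rr((m+1)∖{k})]` is the same for all `b ∈ [H]^n` with
`b[(m+1)∖{k}] = a`. -/
theorem uniformDeltaSystem_root_indep
    (H : Set Ordinal.{u}) (hH : ∀ β ∈ H, ∃ γ ∈ H, β < γ)
    (n : ℕ) (hn : 1 ≤ n)
    (u : Finset Ordinal.{u} → Set Ordinal.{u}) (ρ : Ordinal.{u+1})
    (rr : Set Ordinal.{u+1} → Set Ordinal.{u+1})
    (hu : IsUniformDeltaSystem H n u ρ rr)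
    (m k : ℕ) (hmn : m < n) (hkm : k ≤ m)
    (a : Finset Ordinal.{u}) (haH : ↑a ⊆ H) (hac : a.card = m)
    (haddable : ∃ α, KAddable α a k)
    (b b' : Finset Ordinal.{u}) (hbH : ↑b ⊆ H) (hb'H : ↑b' ⊆ H)
    (hbc : b.card = n) (hb'c : b'.card = n)
    (hba : fimg b (Set.Iio ((m : Ordinal.{u+1}) + 1) \ {(k : Ordinal.{u+1})}) = ↑a)
    (hb'a : fimg b' (Set.Iio ((m : Ordinal.{u+1}) + 1) \ {(k : Ordinal.{u+1})}) = ↑a) :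
    img (u b) (rr (Set.Iio ((m : Ordinal.{u+1}) + 1) \ {(k : Ordinal.{u+1})})) =
      img (u b') (rr (Set.Iio ((m : Ordinal.{u+1}) + 1) \ {(k : Ordinal.{u+1})})) := by
  classical
  set M : Set Ordinal.{u+1} := Set.Iio ((m : Ordinal.{u+1}) + 1) \ {(k : Ordinal.{u+1})} with hM
  have hMn : M ⊆ Set.Iio (n : Ordinal.{u+1}) := by
    intro i hi
    rcases mem_M_iff.1 hi with ⟨j, rfl, hj, -⟩
    rw [Set.mem_Iio]
    exact_mod_cast (by omega : j < n)
  have ha : a = b.filter fun x => (b.filter (· < x)).card ≤ m ∧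
      (b.filter (· < x)).card ≠ k := by
    apply Finset.coe_injective
    rw [← hba, fimg_eq]
  have ha' : a = b'.filter fun x => (b'.filter (· < x)).card ≤ m ∧
      (b'.filter (· < x)).card ≠ k := by
    apply Finset.coe_injective
    rw [← hb'a, fimg_eq]
  have hab : a ⊆ b := by rw [ha]; exact Finset.filter_subset _ _
  have hab' : a ⊆ b' := by rw [ha']; exact Finset.filter_subset _ _
  have hbne : b.Nonempty := Finset.card_pos.1 (by omega)
  -- fresh elements above b ∪ b'
  have hbb'H : ↑(b ∪ b') ⊆ H := by
    intro x hx
    rcases Finset.mem_union.1 (by exact_mod_cast hx) with h | h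
    · exact hbH h
    · exact hb'H h
  have hbb'ne : (b ∪ b').Nonempty := ⟨hbne.choose, Finset.mem_union_left _ hbne.choose_spec⟩
  obtain ⟨F, hFH, hFc, hFgt⟩ := exists_fresh H hH (hbb'H ((b ∪ b').max'_mem hbb'ne))
    (n - (m + 1))
  have hsepb : ∀ x ∈ F, ∀ y ∈ b, y < x := fun x hx y hy =>
    lt_of_le_of_lt (Finset.le_max' _ _ (Finset.mem_union_left _ hy)) (hFgt x hx)
  have hsepb' : ∀ x ∈ F, ∀ y ∈ b', y < x := fun x hx y hy =>
    lt_of_le_of_lt (Finset.le_max' _ _ (Finset.mem_union_right _ hy)) (hFgt x hx)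
  -- fresh elements above b ∪ b' ∪ F
  have hbb'Fne : (b ∪ b' ∪ F).Nonempty :=
    ⟨hbne.choose, by simp [Finset.mem_union, hbne.choose_spec]⟩
  have hbb'FH : ↑(b ∪ b' ∪ F) ⊆ H := by
    intro x hx
    rcases Finset.mem_union.1 (by exact_mod_cast hx) with h | h
    · exact hbb'H (by exact_mod_cast h)
    · exact hFH h
  obtain ⟨F', hF'H, hF'c, hF'gt⟩ := exists_fresh H hH (hbb'FH ((b ∪ b' ∪ F).max'_mem hbb'Fne))
    (n - (m + 1))
  have hsep'b : ∀ x ∈ F', ∀ y ∈ b, y < x := fun x hx y hy =>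
    lt_of_le_of_lt (Finset.le_max' _ _ (by simp [Finset.mem_union, hy])) (hF'gt x hx)
  have hsep'b' : ∀ x ∈ F', ∀ y ∈ b', y < x := fun x hx y hy =>
    lt_of_le_of_lt (Finset.le_max' _ _ (by simp [Finset.mem_union, hy])) (hF'gt x hx)
  have hsep'F : ∀ x ∈ F', ∀ y ∈ F, y < x := fun x hx y hy =>
    lt_of_le_of_lt (Finset.le_max' _ _ (by simp [Finset.mem_union, hy])) (hF'gt x hx)
  obtain ⟨β, hβb, hβk, hβa, hblow, hccard, haligned, hconj7, hconj8, hconj9⟩ :=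
    aux_struct n m k hmn hkm b a F hbc hac ha hFc hsepb
  obtain ⟨β', hβ'b, hβ'k, hβ'a, hblow', hc'card, haligned', hconj7', hconj8', hconj9'⟩ :=
    aux_struct n m k hmn hkm b' a F' hb'c hac ha' hF'c hsep'b'
  set c : Finset Ordinal.{u} := lowc b m ∪ F with hc
  set c' : Finset Ordinal.{u} := lowc b' m ∪ F' with hc'
  have hcH : ↑c ⊆ H := by
    intro x hx
    rcases Finset.mem_union.1 (by exact_mod_cast hx) with h | h
    · exact hbH (Finset.filter_subset _ _ h)
    · exact hFH h
  have hc'H : ↑c' ⊆ H := by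
    intro x hx
    rcases Finset.mem_union.1 (by exact_mod_cast hx) with h | h
    · exact hb'H (Finset.filter_subset _ _ h)
    · exact hF'H h
  -- M ⊆ ralign b c and M ⊆ ralign b' c'
  have hMbc : M ⊆ ralign ↑b ↑c := by
    intro i hi
    rcases mem_M_iff.1 hi with ⟨j, rfl, hj, -⟩
    obtain ⟨x, hxlow, hx1, hx2⟩ := hconj7 j hj
    refine ⟨x, enumAt_finset.2 ⟨Finset.filter_subset _ _ hxlow, by rw [hx1]⟩,
      enumAt_finset.2 ⟨Finset.mem_union_left _ hxlow, by rw [hx2]⟩⟩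
  have hMb'c' : M ⊆ ralign ↑b' ↑c' := by
    intro i hi
    rcases mem_M_iff.1 hi with ⟨j, rfl, hj, -⟩
    obtain ⟨x, hxlow, hx1, hx2⟩ := hconj7' j hj
    refine ⟨x, enumAt_finset.2 ⟨Finset.filter_subset _ _ hxlow, by rw [hx1]⟩,
      enumAt_finset.2 ⟨Finset.mem_union_left _ hxlow, by rw [hx2]⟩⟩
  -- members of c are in (insert β a) or F
  have hmemc : ∀ γ ∈ c, γ ∈ F ∨ γ = β ∨ γ ∈ a := by
    intro γ hγ
    rcases Finset.mem_union.1 hγ with h | h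
    · rw [hblow] at h
      rcases Finset.mem_insert.1 h with h | h
      · exact Or.inr (Or.inl h)
      · exact Or.inr (Or.inr h)
    · exact Or.inl h
  have hmemc' : ∀ γ ∈ c', γ ∈ F' ∨ γ = β' ∨ γ ∈ a := by
    intro γ hγ
    rcases Finset.mem_union.1 hγ with h | h
    · rw [hblow'] at h
      rcases Finset.mem_insert.1 h with h | h
      · exact Or.inr (Or.inl h)
      · exact Or.inr (Or.inr h)
    · exact Or.inl h
  -- Aligned c c'
  have hcc'mem : ∀ γ, γ ∈ c → γ ∈ c' → (γ ∈ a ∨ (γ = β ∧ γ = β')) := by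
    intro γ hγc hγc'
    have hγnF : γ ∉ F := by
      intro hγF
      rcases hmemc' γ hγc' with h | h | h
      · exact lt_irrefl γ (hsep'F γ h γ hγF)
      · exact lt_irrefl γ (h ▸ hsepb' γ hγF β' hβ'b)
      · exact lt_irrefl γ (hsepb' γ hγF γ (hab' h))
    have hγnF' : γ ∉ F' := by
      intro hγF'
      rcases hmemc γ hγc with h | h | h
      · exact lt_irrefl γ (hsep'F γ hγF' γ h)
      · exact lt_irrefl γ (h ▸ hsep'b γ hγF' β hβb)
      · exact lt_irrefl γ (hsep'b γ hγF' γ (hab h))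
    rcases hmemc γ hγc with h | h | h
    · exact absurd h hγnF
    · rcases hmemc' γ hγc' with h' | h' | h'
      · exact absurd h' hγnF'
      · exact Or.inr ⟨h, h'⟩
      · exact Or.inl h'
    · exact Or.inl h
  have halcc' : Aligned ↑c ↑c' := by
    constructor
    · rw [otp_finset, otp_finset, hccard, hc'card]
    · rintro γ ⟨hγc, hγc'⟩
      have hγc2 : γ ∈ c := by exact_mod_cast hγc
      have hγc'2 : γ ∈ c' := by exact_mod_cast hγc'
      rw [otp_inter, otp_inter]
      rcases hcc'mem γ hγc2 hγc'2 with h | ⟨h1, h2⟩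
      · rw [hconj8 γ h, hconj8' γ h]
      · have e1 : (Finset.filter (· < γ) c).card = k := by rw [h1]; exact hconj9
        have e2 : (Finset.filter (· < γ) c').card = k := by rw [h2]; exact hconj9'
        rw [e1, e2]
  have hMcc' : M ⊆ ralign ↑c ↑c' := by
    intro i hi
    rcases mem_M_iff.1 hi with ⟨j, rfl, hj, hjk⟩
    rcases Nat.lt_or_ge j k with hjlt | hjge
    · -- j < k : take the element of a at position j
      obtain ⟨x, hxa, hxj⟩ := exists_pos_eq a (show j < a.card by omega)
      have hxc : x ∈ c := Finset.mem_union_left _ (by rw [hblow]; exact Finset.mem_insert_of_mem hxa)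
      have hxc' : x ∈ c' := Finset.mem_union_left _ (by rw [hblow']; exact Finset.mem_insert_of_mem hxa)
      have h1 : (c.filter (· < x)).card = j := by
        rw [hconj8 x hxa, hxj, if_neg (by omega)]; omega
      have h2 : (c'.filter (· < x)).card = j := by
        rw [hconj8' x hxa, hxj, if_neg (by omega)]; omega

      exact ⟨x, enumAt_finset.2 ⟨hxc, by rw [h1]⟩, enumAt_finset.2 ⟨hxc', by rw [h2]⟩⟩
    · -- j > k : take the element of a at position j - 1
      have hjk' : k < j := by omega
      obtain ⟨x, hxa, hxj⟩ := exists_pos_eq a (show j - 1 < a.card by omega)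
      have hxc : x ∈ c := Finset.mem_union_left _ (by rw [hblow]; exact Finset.mem_insert_of_mem hxa)
      have hxc' : x ∈ c' := Finset.mem_union_left _ (by rw [hblow']; exact Finset.mem_insert_of_mem hxa)
      have h1 : (c.filter (· < x)).card = j := by
        rw [hconj8 x hxa, hxj, if_pos (by omega)]
        omega
      have h2 : (c'.filter (· < x)).card = j := by
        rw [hconj8' x hxa, hxj, if_pos (by omega)]
        omega
      exact ⟨x, enumAt_finset.2 ⟨hxc, by rw [h1]⟩, enumAt_finset.2 ⟨hxc', by rw [h2]⟩⟩
  have e1 : img (u b) (rr M) = img (u c) (rr M) :=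
    key_transfer hu hbH hcH hbc hccard haligned hMbc hMn
  have e2 : img (u c) (rr M) = img (u c') (rr M) :=
    key_transfer hu hcH hc'H hccard hc'card halcc' hMcc' hMn
  have e3 : img (u b') (rr M) = img (u c') (rr M) :=
    key_transfer hu hb'H hc'H hb'c hc'card haligned' hMb'c' hMn
  rw [e1, e2, e3]
end

section
/- Let I be an inverse sequence of abelian groups over ω in which every bonding map p_k : I_{k+1} → I_k is surjective with divisible kernel, each I_k is divisible, and for each x ∈ I_{k+1}, y ∈ I_k, m ∈ ℤ with m·y = p_k(x) there is z ∈ I_{k+1} with m·z = x and p_k(z) = y. Then for every abelian group monomorphism situation over ω-indexed inverse sequences — i.e., whenever G, H are inverse sequences over ω, ψ : G → H is a levelwise-injective morphism of inverse sequences, and φ : G → I is a morphism — there exists a morphism φ̄ : H → I of inverse sequences with φ̄ ∘ ψ = φ. (I is an injective object in Ab^{ω^op}.) -/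
/-!
Divisible groups are injective `ℤ`-modules (Baer), so each bonding map `pₖ`, being surjective with
divisible kernel, splits; with a section `σ` of `pₖ` any map into `I k` lifts to `I (k + 1)`, and
the lift can be corrected by a map into `ker pₖ` so that it also extends `φ (k + 1)` along `ψ`.
Starting from an extension of `φ 0` into the divisible group `I 0`, the extension `φ̄` is then
built level by level.
-/

theorem Module.Baer.of_exists_nsmul_eq {T : Type*} [AddCommGroup T]
    (h : ∀ (x : T) (d : ℕ), 0 < d → ∃ y, d • y = x) : Module.Baer ℤ T :=
  letI : DivisibleBy T ℕ :=
    divisibleByOfSMulRightSurj T ℕ fun hd x => h x _ (Nat.pos_of_ne_zero hd)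
  letI := AddGroup.divisibleByIntOfDivisibleByNat T
  Module.Baer.of_divisible T

theorem AddMonoidHom.exists_rightInverse_of_baer_ker {A B : Type*} [AddCommGroup A]
    [AddCommGroup B] (p : A →+ B) (hp : Function.Surjective p) (hK : Module.Baer ℤ p.ker) :
    ∃ σ : B →+ A, p.comp σ = AddMonoidHom.id B := by
  obtain ⟨ρ, hρ⟩ := hK.extension_property_addMonoidHom p.ker.subtype Subtype.val_injective
    (AddMonoidHom.id _)
  have hexact : Function.Exact p.ker.subtype.toIntLinearMap p.toIntLinearMap := fun x =>
    ⟨fun hx => ⟨⟨x, hx⟩, rfl⟩, by rintro ⟨y, rfl⟩; exact y.2⟩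
  have hretract : ∃ l, l ∘ₗ p.ker.subtype.toIntLinearMap = LinearMap.id :=
    ⟨ρ.toIntLinearMap, LinearMap.ext fun x => DFunLike.congr_fun hρ x⟩
  obtain ⟨σ, hσ⟩ := ((hexact.split_tfae Subtype.val_injective hp).out 1 0).mp hretract
  exact ⟨σ.toAddMonoidHom, AddMonoidHom.ext fun b => LinearMap.congr_fun hσ b⟩

theorem AddMonoidHom.exists_lift_extension_of_baer_ker {A B G H : Type*} [AddCommGroup A]
    [AddCommGroup B] [AddCommGroup G] [AddCommGroup H] (p : A →+ B)
    (hp : Function.Surjective p) (hK : Module.Baer ℤ p.ker) (ψ : G →+ H)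
    (hψ : Function.Injective ψ) (f : H →+ B) (g : G →+ A) (hfg : p.comp g = f.comp ψ) :
    ∃ h : H →+ A, p.comp h = f ∧ h.comp ψ = g := by
  obtain ⟨σ, hσ⟩ := p.exists_rightInverse_of_baer_ker hp hK
  have hσ' : ∀ b, p (σ b) = b := DFunLike.congr_fun hσ
  let u : G →+ p.ker := (g - σ.comp (f.comp ψ)).codRestrict p.ker fun a => by
    simp [hσ', ← AddMonoidHom.comp_apply p g, hfg]
  obtain ⟨v, hv⟩ := hK.extension_property_addMonoidHom ψ hψ u
  refine ⟨σ.comp f + p.ker.subtype.comp v, ?_, ?_⟩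
  · ext x
    simpa [hσ'] using AddMonoidHom.mem_ker.mp (v x).2
  · ext a
    have hva : (v (ψ a) : A) = g a - σ (f (ψ a)) :=
      congrArg Subtype.val (DFunLike.congr_fun hv a)
    simp [hva]

theorem Nat.exists_seq_of_exists_succ {X : ℕ → Sort*} (P : ∀ k, X k → Prop)
    (R : ∀ k, X k → X (k + 1) → Prop) (h0 : ∃ x, P 0 x)
    (hstep : ∀ k x, P k x → ∃ y, P (k + 1) y ∧ R k x y) :
    ∃ x : ∀ k, X k, (∀ k, P k (x k)) ∧ ∀ k, R k (x k) (x (k + 1)) := by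
  choose next hnext using hstep
  let x : ∀ k, {x : X k // P k x} := fun k =>
    Nat.rec ⟨h0.choose, h0.choose_spec⟩ (fun k y => ⟨next k y.1 y.2, (hnext k y.1 y.2).1⟩) k
  exact ⟨fun k => (x k).1, fun k => (x k).2, fun k => (hnext k (x k).1 (x k).2).2⟩

theorem injective_of_divisibility_conditions_general
    {I : ℕ → Type u} [∀ k, AddCommGroup (I k)] (p : ∀ k, I (k + 1) →+ I k)
    (hsurj : ∀ k, Function.Surjective (p k))
    (hkerdiv : ∀ k (x : I (k + 1)), p k x = 0 → ∀ d : ℕ, 0 < d → ∃ y, p k y = 0 ∧ d • y = x)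
    (hdiv : ∀ k (x : I k) (d : ℕ), 0 < d → ∃ y, d • y = x) :
    ∀ (G H : ℕ → Type u) (_ : ∀ k, AddCommGroup (G k)) (_ : ∀ k, AddCommGroup (H k))
      (q : ∀ k, G (k + 1) →+ G k) (r : ∀ k, H (k + 1) →+ H k)
      (ψ : ∀ k, G k →+ H k) (φ : ∀ k, G k →+ I k),
      (∀ k, (r k).comp (ψ (k + 1)) = (ψ k).comp (q k)) →
      (∀ k, (p k).comp (φ (k + 1)) = (φ k).comp (q k)) →
      (∀ k, Function.Injective (ψ k)) →
      ∃ φb : ∀ k, H k →+ I k,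
        (∀ k, (p k).comp (φb (k + 1)) = (φb k).comp (r k)) ∧
        (∀ k, (φb k).comp (ψ k) = φ k) := by
  intro G H _ _ q r ψ φ hψ hφ hψinj
  have hker : ∀ k, Module.Baer ℤ (p k).ker := fun k =>
    Module.Baer.of_exists_nsmul_eq fun x d hd =>
      let ⟨y, hy, hyx⟩ := hkerdiv k x x.2 d hd
      ⟨⟨y, hy⟩, Subtype.ext hyx⟩
  obtain ⟨φb, hφb, hp⟩ := Nat.exists_seq_of_exists_succ (X := fun k => H k →+ I k)
    (fun k f => f.comp (ψ k) = φ k) (fun k f f' => (p k).comp f' = f.comp (r k))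
    ((Module.Baer.of_exists_nsmul_eq (hdiv 0)).extension_property_addMonoidHom (ψ 0) (hψinj 0)
      (φ 0))
    fun k f hf => by
      obtain ⟨f', hpf', hf'⟩ := (p k).exists_lift_extension_of_baer_ker (hsurj k) (hker k)
        (ψ (k + 1)) (hψinj (k + 1)) (f.comp (r k)) (φ (k + 1))
        (by rw [hφ, AddMonoidHom.comp_assoc, hψ, ← AddMonoidHom.comp_assoc, hf])
      exact ⟨f', hf', hpf'⟩
  exact ⟨φb, hp, hφb⟩

/-- An inverse sequence of abelian groups whose bonding maps are surjective with
divisible kernel, whose groups are divisible, and which satisfies the simultaneous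
division-and-lifting property, is an injective object in the category of inverse
sequences of abelian groups over `ω`: every morphism into it from a subobject
(levelwise-injective morphism source) extends. -/
theorem injective_of_divisibility_conditions
    {I : ℕ → Type u} [∀ k, AddCommGroup (I k)] (p : ∀ k, I (k + 1) →+ I k)
    (hsurj : ∀ k, Function.Surjective (p k))
    (hkerdiv : ∀ k (x : I (k + 1)), p k x = 0 → ∀ d : ℕ, 0 < d → ∃ y, p k y = 0 ∧ d • y = x)
    (hdiv : ∀ k (x : I k) (d : ℕ), 0 < d → ∃ y, d • y = x)
    (hlift : ∀ k (x : I (k + 1)) (y : I k) (m : ℤ), m • y = p k x →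
      ∃ z : I (k + 1), m • z = x ∧ p k z = y) :
    ∀ (G H : ℕ → Type u) (_ : ∀ k, AddCommGroup (G k)) (_ : ∀ k, AddCommGroup (H k))
      (q : ∀ k, G (k + 1) →+ G k) (r : ∀ k, H (k + 1) →+ H k)
      (ψ : ∀ k, G k →+ H k) (φ : ∀ k, G k →+ I k),
      (∀ k, (r k).comp (ψ (k + 1)) = (ψ k).comp (q k)) →
      (∀ k, (p k).comp (φ (k + 1)) = (φ k).comp (q k)) →
      (∀ k, Function.Injective (ψ k)) →
      ∃ φb : ∀ k, H k →+ I k,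
        (∀ k, (p k).comp (φb (k + 1)) = (φb k).comp (r k)) ∧
        (∀ k, (φb k).comp (ψ k) = φ k) :=
  injective_of_divisibility_conditions_general p hsurj hkerdiv hdiv
end

section
/- Let I be an inverse sequence of abelian groups over ω that is an injective object in the category Ab^{ω^op} of inverse sequences of abelian groups. Suppose some x ∈ I_n is not in the image of the bonding map p_n : I_{n+1} → I_n. Then one obtains a contradiction; i.e., if I is injective in Ab^{ω^op}, then every bonding map p_n : I_{n+1} → I_n is surjective. -/
/-!
Given `x ∈ I n`, adjoin a copy of `ℤ` to `I` above level `n`, with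
the generator at level `n + 1` mapped to `x`. The inclusion of `I` into this larger sequence is
levelwise injective, so injectivity of `I` yields a retraction `ρ`; then `ρ (n + 1)` of the
generator is a preimage of `x` under `p n`.
-/

universe u

/-- An inverse sequence of abelian groups `⟨I k, p k⟩` over `ω` is an injective object
in the category `Ab^{ω^op}` of inverse sequences of abelian groups: for every
levelwise-injective morphism `ψ : G → H` of inverse sequences and every morphism
`φ : G → I`, there is a morphism `φ̄ : H → I` with `φ̄ ∘ ψ = φ`. -/
def IsInjectiveSeq {I : ℕ → Type u} [∀ k, AddCommGroup (I k)]
    (p : ∀ k, I (k + 1) →+ I k) : Prop :=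
  ∀ (G H : ℕ → Type u) (_ : ∀ k, AddCommGroup (G k)) (_ : ∀ k, AddCommGroup (H k))
    (q : ∀ k, G (k + 1) →+ G k) (r : ∀ k, H (k + 1) →+ H k)
    (ψ : ∀ k, G k →+ H k) (φ : ∀ k, G k →+ I k),
    (∀ k, (r k).comp (ψ (k + 1)) = (ψ k).comp (q k)) →
    (∀ k, (p k).comp (φ (k + 1)) = (φ k).comp (q k)) →
    (∀ k, Function.Injective (ψ k)) →
    ∃ φb : ∀ k, H k →+ I k,
      (∀ k, (p k).comp (φb (k + 1)) = (φb k).comp (r k)) ∧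
      (∀ k, (φb k).comp (ψ k) = φ k)

theorem IsInjectiveSeq.exists_retraction {I : ℕ → Type u} [∀ k, AddCommGroup (I k)]
    {p : ∀ k, I (k + 1) →+ I k} (hI : IsInjectiveSeq p)
    (H : ℕ → Type u) [∀ k, AddCommGroup (H k)] (r : ∀ k, H (k + 1) →+ H k)
    (ψ : ∀ k, I k →+ H k) (hψ : ∀ k, (r k).comp (ψ (k + 1)) = (ψ k).comp (p k))
    (hψ_inj : ∀ k, Function.Injective (ψ k)) :
    ∃ ρ : ∀ k, H k →+ I k,
      (∀ k, (p k).comp (ρ (k + 1)) = (ρ k).comp (r k)) ∧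
      ∀ k, (ρ k).comp (ψ k) = AddMonoidHom.id (I k) :=
  hI I H _ _ p r ψ (fun k => AddMonoidHom.id (I k)) hψ (fun _ => rfl) hψ_inj

namespace IsInjectiveSeq

variable {I : ℕ → Type u} [∀ k, AddCommGroup (I k)] (p : ∀ k, I (k + 1) →+ I k)
  (n : ℕ) (x : I n)

/-- Bonding maps of `I ⊕ ℤ` sending the generator of `ℤ` at level `n + 1` to `x`. The `ℤ`
summand is present at every level but killed by the bonding maps into levels `≤ n`, which
avoids a level-dependent type. -/
def adjoinBond (k : ℕ) : I (k + 1) × ULift.{u} ℤ →+ I k × ULift.{u} ℤ where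
  toFun a := (p k a.1 + a.2.down • Pi.single n x k, ⟨if n < k then a.2.down else 0⟩)
  map_zero' := by simp [Prod.ext_iff, ULift.ext_iff]
  map_add' a b := by
    simp only [Prod.fst_add, Prod.snd_add, ULift.add_down, map_add, add_smul, Prod.mk_add_mk,
      Prod.ext_iff, ULift.ext_iff]
    constructor
    · abel
    · split_ifs <;> simp

theorem adjoinBond_comp_inl (k : ℕ) :
    (adjoinBond p n x k).comp (AddMonoidHom.inl _ _) = (AddMonoidHom.inl _ _).comp (p k) := by
  ext a <;> simp [adjoinBond]

theorem adjoinBond_generator : adjoinBond p n x n (0, ⟨1⟩) = (x, 0) := by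
  simp [adjoinBond, Prod.ext_iff, ULift.ext_iff]

end IsInjectiveSeq

open IsInjectiveSeq in
/-- If an inverse sequence of abelian groups is an injective object in `Ab^{ω^op}`,
then every bonding map is surjective. -/
theorem bonding_surjective_of_injectiveSeq
    {I : ℕ → Type u} [∀ k, AddCommGroup (I k)] (p : ∀ k, I (k + 1) →+ I k)
    (hinj : IsInjectiveSeq p) : ∀ k, Function.Surjective (p k) := by
  intro n x
  obtain ⟨ρ, hρ_comm, hρ_retr⟩ :=
    hinj.exists_retraction (fun k => I k × ULift.{u} ℤ) (adjoinBond p n x)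
      (fun k => AddMonoidHom.inl _ _) (adjoinBond_comp_inl p n x)
      (fun _ _ _ h => congrArg Prod.fst h)
  refine ⟨ρ (n + 1) (0, ⟨1⟩), ?_⟩
  calc p n (ρ (n + 1) (0, ⟨1⟩)) = ρ n (adjoinBond p n x n (0, ⟨1⟩)) :=
        DFunLike.congr_fun (hρ_comm n) _
    _ = ρ n (AddMonoidHom.inl _ _ x) := by rw [adjoinBond_generator, AddMonoidHom.inl_apply]
    _ = x := DFunLike.congr_fun (hρ_retr n) x
end

section
/- Let I be an inverse sequence of abelian groups over ω that is injective in Ab^{ω^op}. Then each I_k is a divisible abelian group. -/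
/-!
An element `x : I k` is the image of `1` under a morphism from the inverse sequence `Z_k` that is
`ℤ` at every level, with identity transitions below `k` and zero transitions from `k` on
(`truncIntTransition k`).
Multiplication by `d > 0` is a levelwise-injective endomorphism of `Z_k`, so by injectivity the
morphism extends along it to some `φ`, and then `d • φ_k(1) = x`.
-/

universe u

section TruncatedInt

variable {I : ℕ → Type u} [∀ k, AddCommGroup (I k)] (p : ∀ k, I (k + 1) →+ I k)

def restrictTo {k : ℕ} (x : I k) {j : ℕ} (h : j ≤ k) : I j :=
  Nat.decreasingInduction (motive := fun j _ => I j) (fun j _ y => p j y) x h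

@[simp]
lemma restrictTo_self {k : ℕ} (x : I k) : restrictTo p x le_rfl = x :=
  Nat.decreasingInduction_self ..

lemma map_restrictTo {k j : ℕ} (x : I k) (h : j + 1 ≤ k) :
    p j (restrictTo p x h) = restrictTo p x (Nat.le_of_succ_le h) :=
  (Nat.decreasingInduction_succ_left ..).symm

def truncIntTransition (k j : ℕ) : ULift.{u} ℤ →+ ULift.{u} ℤ :=
  if j < k then AddMonoidHom.id _ else 0

lemma truncIntTransition_comp_comm (k j : ℕ) (f : ULift.{u} ℤ →+ ULift.{u} ℤ) :
    (truncIntTransition k j).comp f = f.comp (truncIntTransition k j) := by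
  unfold truncIntTransition
  split_ifs <;> ext <;> simp

def truncIntHom {k : ℕ} (x : I k) (j : ℕ) : ULift.{u} ℤ →+ I j :=
  if h : j ≤ k then (zmultiplesHom (I j) (restrictTo p x h)).comp AddEquiv.ulift.toAddMonoidHom
  else 0

lemma truncIntHom_comm {k : ℕ} (x : I k) (j : ℕ) :
    (p j).comp (truncIntHom p x (j + 1)) = (truncIntHom p x j).comp (truncIntTransition k j) := by
  ext n
  rcases lt_trichotomy j k with hjk | rfl | hkj
  · simp [truncIntHom, truncIntTransition, hjk, hjk.le, Nat.succ_le_of_lt hjk, map_restrictTo]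
  · simp [truncIntHom, truncIntTransition]
  · simp [truncIntHom, truncIntTransition, show ¬j ≤ k by omega, show ¬j + 1 ≤ k by omega]

lemma truncIntHom_self_apply {k : ℕ} (x : I k) (n : ULift.{u} ℤ) :
    truncIntHom p x k n = n.down • x := by
  simp only [truncIntHom, dif_pos le_rfl, restrictTo_self]
  rfl

end TruncatedInt

/-- If an inverse sequence of abelian groups is an injective object in `Ab^{ω^op}`,
then each of its groups is divisible. -/
theorem divisible_of_injectiveSeq
    {I : ℕ → Type u} [∀ k, AddCommGroup (I k)] (p : ∀ k, I (k + 1) →+ I k)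
    (hinj : IsInjectiveSeq p) :
    ∀ k (x : I k) (d : ℕ), 0 < d → ∃ y : I k, d • y = x := by
  intro k x d hd
  let mul_d : ULift.{u} ℤ →+ ULift.{u} ℤ := d • AddMonoidHom.id _
  have mul_d_injective : Function.Injective mul_d := fun a b h =>
    ULift.ext _ _ (nsmul_right_injective hd.ne' (congrArg ULift.down h))
  obtain ⟨φ, -, hφ⟩ := hinj _ _ _ _ (truncIntTransition k) (truncIntTransition k)
    (fun _ => mul_d) (truncIntHom p x) (fun j => truncIntTransition_comp_comm k j mul_d)
    (truncIntHom_comm p x) (fun _ => mul_d_injective)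
  refine ⟨φ k ⟨1⟩, ?_⟩
  calc d • φ k ⟨1⟩ = φ k (mul_d ⟨1⟩) := (map_nsmul (φ k) d ⟨1⟩).symm
    _ = truncIntHom p x k ⟨1⟩ := DFunLike.congr_fun (hφ k) ⟨1⟩
    _ = x := by rw [truncIntHom_self_apply]; exact one_smul ℤ x
end

section
/- Let κ be a cardinal, and let G be an Ω_κ-system with X ⊆ ω^κ. Suppose Φ = ⟨Φ_f ∈ Ḡ_f | f ∈ X⟩ is a 1-coherent family (dΦ ∈ K^1(G ↾ X), i.e., for all f, g ∈ X, p_{f,f∧g}Φ_f − p_{g,f∧g}Φ_g has finite support), that A ⊆ X is such that Φ ↾ A is type I trivial via ψ ∈ lim Ḡ (for each g ∈ A, Φ_g agrees with the projection of ψ off a finite set), and that for every infinite E ⊆ κ and every h : E → ω there is g ∈ A with {α ∈ E | h(α) ≤ g(α)} infinite. Then ψ type-I-trivializes Φ on all of X: for every f ∈ X, Φ_f agrees with p_f(ψ) off a finite subset of κ. -/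
/-!
If `Φ_f` and `p_f ψ` disagreed on an infinite set `E`, some `g ∈ A` would satisfy `f ≤ g` on
an infinite part of `E`. Off finitely many coordinates, `Φ_g = ψ_g` there and `Φ_f`, `Φ_g`
agree below `f ∧ g`; at such a coordinate `f ∧ g = f`, so the bonding map to `f ∧ g` is the
identity and `Φ_f = ψ_f` follows from the thread condition of `ψ`.
-/

namespace OmegaSystem

variable {κ : Type*} {G : κ → ℕ → Type*} [∀ a k, AddCommGroup (G a k)]
  {p : ∀ a j k, k ≤ j → (G a j →+ G a k)}

theorem bonding_injective_of_eq (hid : ∀ a k, p a k k le_rfl = AddMonoidHom.id (G a k))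
    {a : κ} {j k : ℕ} (h : k ≤ j) (hkj : k = j) : Function.Injective (p a j k h) := by
  subst hkj
  rw [hid]
  exact Function.injective_id

theorem eq_thread_apply_of_le (hid : ∀ a k, p a k k le_rfl = AddMonoidHom.id (G a k))
    {ψ : ∀ f : κ → ℕ, ∀ a, G a (f a)}
    (hψ : ∀ f g : κ → ℕ, ∀ h : f ≤ g, ∀ a, p a (g a) (f a) (h a) (ψ g a) = ψ f a)
    {f g : κ → ℕ} {a : κ} (hle : f a ≤ g a) {x : G a (f a)}
    (hx : p a (f a) (min (f a) (g a)) (min_le_left _ _) x =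
      p a (g a) (min (f a) (g a)) (min_le_right _ _) (ψ g a)) :
    x = ψ f a := by
  apply bonding_injective_of_eq hid (min_le_left _ _) (min_eq_left hle)
  let fg : κ → ℕ := fun b => min (f b) (g b)
  rw [hx, hψ fg g (fun _ => min_le_right _ _), hψ fg f (fun _ => min_le_left _ _)]

end OmegaSystem

theorem oneCoherent_trivialization_propagates_general
    {κ : Type*} {G : κ → ℕ → Type*} [∀ a k, AddCommGroup (G a k)]
    (p : ∀ a j k, k ≤ j → (G a j →+ G a k))
    (hid : ∀ a k, p a k k le_rfl = AddMonoidHom.id (G a k))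
    (X : Set (κ → ℕ))
    (Φ : ∀ f : κ → ℕ, f ∈ X → ∀ a, G a (f a))
    (hcoh : ∀ f (hf : f ∈ X) g (hg : g ∈ X),
      {a | p a (f a) (min (f a) (g a)) (min_le_left _ _) (Φ f hf a) ≠
           p a (g a) (min (f a) (g a)) (min_le_right _ _) (Φ g hg a)}.Finite)
    (ψ : ∀ f : κ → ℕ, ∀ a, G a (f a))
    (hψ : ∀ f g : κ → ℕ, ∀ h : f ≤ g, ∀ a, p a (g a) (f a) (h a) (ψ g a) = ψ f a)
    (A : Set (κ → ℕ)) (hAX : A ⊆ X)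
    (htrivA : ∀ g (hg : g ∈ A), {a | Φ g (hAX hg) a ≠ ψ g a}.Finite)
    (hA : ∀ E : Set κ, E.Infinite → ∀ h : κ → ℕ,
      ∃ g ∈ A, {a | a ∈ E ∧ h a ≤ g a}.Infinite) :
    ∀ f (hf : f ∈ X), {a | Φ f hf a ≠ ψ f a}.Finite := by
  intro f hf
  by_contra hE
  obtain ⟨g, hgA, hdom⟩ := hA _ hE f
  obtain ⟨a, ⟨hne, hle⟩, hgood⟩ :=
    (hdom.sdiff ((hcoh f hf g (hAX hgA)).union (htrivA g hgA))).nonempty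
  simp only [Set.mem_union, Set.mem_ofPred_eq, not_or, not_not] at hgood
  obtain ⟨hcoh_a, htriv_a⟩ := hgood
  exact hne (OmegaSystem.eq_thread_apply_of_le hid hψ hle (hcoh_a.trans (congrArg _ htriv_a)))

/-- Propagation of type I trivializations for 1-coherent families of an `Ω_κ`-system.
Let `G` be an `Ω_κ`-system (groups `G α k` with compatible bonding maps `p`),
`X ⊆ ω^κ`, and `Φ = ⟨Φ_f ∈ Ḡ_f | f ∈ X⟩` a 1-coherent family: for all `f, g ∈ X`
the projections of `Φ_f` and `Φ_g` to `Ḡ_{f∧g}` differ in only finitely many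
coordinates.  Suppose `ψ ∈ lim Ḡ` (a thread `⟨ψ_f⟩` compatible under the bonding
maps) type-I-trivializes `Φ` on a set `A ⊆ X` which, for every infinite `E ⊆ κ`
and every `h : κ → ω`, contains some `g` with `h(α) ≤ g(α)` for infinitely many
`α ∈ E`.  Then `ψ` type-I-trivializes `Φ` on all of `X`. -/
theorem oneCoherent_trivialization_propagates
    {κ : Type*} {G : κ → ℕ → Type*} [∀ a k, AddCommGroup (G a k)]
    (p : ∀ a j k, k ≤ j → (G a j →+ G a k))
    (hid : ∀ a k, p a k k le_rfl = AddMonoidHom.id (G a k))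
    (hcomp : ∀ a j k ℓ (h₁ : ℓ ≤ k) (h₂ : k ≤ j),
      (p a k ℓ h₁).comp (p a j k h₂) = p a j ℓ (h₁.trans h₂))
    (X : Set (κ → ℕ))
    (Φ : ∀ f : κ → ℕ, f ∈ X → ∀ a, G a (f a))
    (hcoh : ∀ f (hf : f ∈ X) g (hg : g ∈ X),
      {a | p a (f a) (min (f a) (g a)) (min_le_left _ _) (Φ f hf a) ≠
           p a (g a) (min (f a) (g a)) (min_le_right _ _) (Φ g hg a)}.Finite)
    (ψ : ∀ f : κ → ℕ, ∀ a, G a (f a))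
    (hψ : ∀ f g : κ → ℕ, ∀ h : f ≤ g, ∀ a, p a (g a) (f a) (h a) (ψ g a) = ψ f a)
    (A : Set (κ → ℕ)) (hAX : A ⊆ X)
    (htrivA : ∀ g (hg : g ∈ A), {a | Φ g (hAX hg) a ≠ ψ g a}.Finite)
    (hA : ∀ E : Set κ, E.Infinite → ∀ h : κ → ℕ,
      ∃ g ∈ A, {a | a ∈ E ∧ h a ≤ g a}.Infinite) :
    ∀ f (hf : f ∈ X), {a | Φ f hf a ≠ ψ f a}.Finite :=
  oneCoherent_trivialization_propagates_general p hid X Φ hcoh ψ hψ A hAX htrivA hA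
end
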